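/- For the tensor product connection on V₁ ⊗ V₂ with local gauge field A_{ik}^{jl} = A₁_i^j δ_k^l + δ_i^j A₂_k^l, the Chern-Simons three-form satisfies ω₃(A) = rk(V₂)·ω₃(A₁) + rk(V₁)·ω₃(A₂), i.e. for matrix-valued one-forms A₁ (n×n) and A₂ (m×m), setting A = A₁ ⊗ I_m + I_n ⊗ A₂ (Kronecker-product-valued one-form), tr(dA∧A + (2/3)A³) = m·tr(dA₁∧A₁ + (2/3)A₁³) + n·tr(dA₂∧A₂ + (2/3)A₂³). -/
import Mathlib


open Matrix Kronecker

/-- Entrywise exterior derivative of a matrix of differential forms. -/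
def matD {Λ : Type*} [Ring Λ] {ι : Type*} (d : Λ →+ Λ) (M : Matrix ι ι Λ) :
    Matrix ι ι Λ :=
  Matrix.of fun i j => d (M i j)

/-- The Chern-Simons three-form `ω₃(A) = tr(dA ∧ A + (2/3) A ∧ A ∧ A)`. -/
noncomputable def csForm {Λ : Type*} [Ring Λ] [Algebra ℚ Λ] {ι : Type*} [Fintype ι]
    (d : Λ →+ Λ) (A : Matrix ι ι Λ) : Λ :=
  Matrix.trace (matD d A * A) + (2 / 3 : ℚ) • Matrix.trace (A * A * A)

section Helpers

variable {Λ : Type*} [Ring Λ] {n m : ℕ}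

lemma csAux_k1 (X Y : Matrix (Fin n) (Fin n) Λ) :
    (X ⊗ₖ (1 : Matrix (Fin m) (Fin m) Λ)) * (Y ⊗ₖ 1) = (X * Y) ⊗ₖ 1 := by
  ext ⟨i,k⟩ ⟨j,l⟩
  simp [Matrix.mul_apply, Matrix.one_apply, Fintype.sum_prod_type,
    mul_ite, ite_mul, Finset.sum_ite_eq, Finset.sum_ite_eq']

lemma csAux_k2 (X Y : Matrix (Fin m) (Fin m) Λ) :
    ((1 : Matrix (Fin n) (Fin n) Λ) ⊗ₖ X) * (1 ⊗ₖ Y) = 1 ⊗ₖ (X * Y) := by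
  ext ⟨i,k⟩ ⟨j,l⟩
  simp [Matrix.mul_apply, Matrix.one_apply, Fintype.sum_prod_type,
    mul_ite, ite_mul, Finset.sum_ite_eq, Finset.sum_ite_eq']

lemma csAux_k3 (X : Matrix (Fin n) (Fin n) Λ) (Y : Matrix (Fin m) (Fin m) Λ) :
    (X ⊗ₖ (1 : Matrix (Fin m) (Fin m) Λ)) * ((1 : Matrix (Fin n) (Fin n) Λ) ⊗ₖ Y)
      = X ⊗ₖ Y := by
  ext ⟨i,k⟩ ⟨j,l⟩
  simp [Matrix.mul_apply, Matrix.one_apply, Fintype.sum_prod_type,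
    mul_ite, ite_mul, Finset.sum_ite_eq, Finset.sum_ite_eq']

lemma csAux_k4 (X : Matrix (Fin n) (Fin n) Λ) (Y : Matrix (Fin m) (Fin m) Λ) :
    ((1 : Matrix (Fin n) (Fin n) Λ) ⊗ₖ Y) * (X ⊗ₖ (1 : Matrix (Fin m) (Fin m) Λ))
      = Matrix.kroneckerMap (fun a b => b * a) X Y := by
  ext ⟨i,k⟩ ⟨j,l⟩
  simp [Matrix.mul_apply, Matrix.one_apply, Fintype.sum_prod_type,
    mul_ite, ite_mul, Finset.sum_ite_eq, Finset.sum_ite_eq']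

lemma csAux_tK (X : Matrix (Fin n) (Fin n) Λ) (Y : Matrix (Fin m) (Fin m) Λ) :
    Matrix.trace (X ⊗ₖ Y) = Matrix.trace X * Matrix.trace Y := by
  simp only [Matrix.trace, Matrix.diag, Fintype.sum_prod_type, Matrix.kroneckerMap_apply,
    Finset.sum_mul, Finset.mul_sum]
  rw [Finset.sum_comm]

lemma csAux_tK' (X : Matrix (Fin n) (Fin n) Λ) (Y : Matrix (Fin m) (Fin m) Λ) :
    Matrix.trace (Matrix.kroneckerMap (fun a b => b * a) X Y)
      = Matrix.trace Y * Matrix.trace X := by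
  simp only [Matrix.trace, Matrix.diag, Fintype.sum_prod_type, Matrix.kroneckerMap_apply,
    Finset.sum_mul, Finset.mul_sum]

lemma csAux_trace_kron_one (X : Matrix (Fin n) (Fin n) Λ) :
    Matrix.trace (X ⊗ₖ (1 : Matrix (Fin m) (Fin m) Λ)) = m • Matrix.trace X := by
  rw [csAux_tK, Matrix.trace_one, nsmul_eq_mul]
  simp only [Fintype.card_fin]
  exact ((Nat.cast_commute m (Matrix.trace X)).eq).symm

lemma csAux_trace_one_kron (X : Matrix (Fin m) (Fin m) Λ) :
    Matrix.trace ((1 : Matrix (Fin n) (Fin n) Λ) ⊗ₖ X) = n • Matrix.trace X := by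
  rw [csAux_tK, Matrix.trace_one, nsmul_eq_mul]
  simp only [Fintype.card_fin]

lemma csAux_matD_add {ι : Type*} (d : Λ →+ Λ) (M N : Matrix ι ι Λ) :
    matD d (M + N) = matD d M + matD d N := by
  ext i j; simp [matD]

lemma csAux_matD_kron_one (d : Λ →+ Λ) (X : Matrix (Fin n) (Fin n) Λ) :
    matD d (X ⊗ₖ (1 : Matrix (Fin m) (Fin m) Λ)) = matD d X ⊗ₖ 1 := by
  ext ⟨i,k⟩ ⟨j,l⟩
  simp only [matD, Matrix.of_apply, Matrix.kroneckerMap_apply, Matrix.one_apply]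
  split_ifs <;> simp

lemma csAux_matD_one_kron (d : Λ →+ Λ) (X : Matrix (Fin m) (Fin m) Λ) :
    matD d ((1 : Matrix (Fin n) (Fin n) Λ) ⊗ₖ X) = 1 ⊗ₖ matD d X := by
  ext ⟨i,k⟩ ⟨j,l⟩
  simp only [matD, Matrix.of_apply, Matrix.kroneckerMap_apply, Matrix.one_apply]
  split_ifs <;> simp

lemma csAux_kswap (𝒜 : ℕ → AddSubgroup Λ)
    (hcomm : ∀ k l x y, x ∈ 𝒜 k → y ∈ 𝒜 l → x * y = ((-1 : ℤ) ^ (k * l)) • (y * x))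
    (X : Matrix (Fin n) (Fin n) Λ) (Y : Matrix (Fin m) (Fin m) Λ)
    (hX : ∀ i j, X i j ∈ 𝒜 1) (hY : ∀ i j, Y i j ∈ 𝒜 1) :
    Matrix.kroneckerMap (fun a b => b * a) X Y = -(X ⊗ₖ Y) := by
  ext ⟨i,k⟩ ⟨j,l⟩
  have := hcomm 1 1 (Y k l) (X i j) (hY _ _) (hX _ _)
  simpa using this

end Helpers

/-- For the tensor product connection `A = A₁ ⊗ I_m + I_n ⊗ A₂` of traceless
matrix-valued one-forms, the Chern-Simons three-form satisfies
`ω₃(A) = m·ω₃(A₁) + n·ω₃(A₂)`. -/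
theorem csForm_tensor_product {Λ : Type*} [Ring Λ] [Algebra ℚ Λ] {n m : ℕ}
    (𝒜 : ℕ → AddSubgroup Λ) (d : Λ →+ Λ)
    (hd : ∀ k x, x ∈ 𝒜 k → d x ∈ 𝒜 (k + 1))
    (hdd : ∀ x, d (d x) = 0)
    (hmul : ∀ k l x y, x ∈ 𝒜 k → y ∈ 𝒜 l → x * y ∈ 𝒜 (k + l))
    (hleib : ∀ k x y, x ∈ 𝒜 k → d (x * y) = d x * y + ((-1 : ℤ) ^ k) • (x * d y))
    (hcomm : ∀ k l x y, x ∈ 𝒜 k → y ∈ 𝒜 l → x * y = ((-1 : ℤ) ^ (k * l)) • (y * x))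
    (A₁ : Matrix (Fin n) (Fin n) Λ) (A₂ : Matrix (Fin m) (Fin m) Λ)
    (hA₁ : ∀ i j, A₁ i j ∈ 𝒜 1) (hA₂ : ∀ i j, A₂ i j ∈ 𝒜 1)
    (htr₁ : Matrix.trace A₁ = 0) (htr₂ : Matrix.trace A₂ = 0) :
    csForm d (A₁ ⊗ₖ (1 : Matrix (Fin m) (Fin m) Λ) +
        (1 : Matrix (Fin n) (Fin n) Λ) ⊗ₖ A₂) =
      (m : ℚ) • csForm d A₁ + (n : ℚ) • csForm d A₂ := by
  set P : Matrix (Fin n × Fin m) (Fin n × Fin m) Λ := A₁ ⊗ₖ 1 with hP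
  set Q : Matrix (Fin n × Fin m) (Fin n × Fin m) Λ := 1 ⊗ₖ A₂ with hQ
  -- the swap term
  have hswap : Q * P = -(A₁ ⊗ₖ A₂) := by
    rw [hP, hQ, csAux_k4, csAux_kswap 𝒜 hcomm A₁ A₂ hA₁ hA₂]
  -- B² = A₁²⊗1 + 1⊗A₂²
  have hsq : (P + Q) * (P + Q) = (A₁ * A₁) ⊗ₖ 1 + 1 ⊗ₖ (A₂ * A₂) := by
    rw [add_mul, mul_add, mul_add, hswap, hP, hQ, csAux_k1, csAux_k2, csAux_k3]
    abel
  -- trace of B³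
  have hcube : Matrix.trace ((P + Q) * (P + Q) * (P + Q))
      = m • Matrix.trace (A₁ * A₁ * A₁) + n • Matrix.trace (A₂ * A₂ * A₂) := by
    rw [hsq, add_mul, mul_add, mul_add, hP, hQ, csAux_k1, csAux_k2, csAux_k3, csAux_k4]
    rw [Matrix.trace_add, Matrix.trace_add, Matrix.trace_add,
      csAux_trace_kron_one, csAux_trace_one_kron, csAux_tK, csAux_tK', htr₁, htr₂]
    simp
  -- derivative of B
  have hdB : matD d (P + Q) = matD d A₁ ⊗ₖ 1 + 1 ⊗ₖ matD d A₂ := by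
    rw [csAux_matD_add, hP, hQ, csAux_matD_kron_one, csAux_matD_one_kron]
  -- trace of dB ∧ B
  have hdBB : Matrix.trace (matD d (P + Q) * (P + Q))
      = m • Matrix.trace (matD d A₁ * A₁) + n • Matrix.trace (matD d A₂ * A₂) := by
    rw [hdB, add_mul, mul_add, mul_add, hP, hQ, csAux_k1, csAux_k2, csAux_k3, csAux_k4]
    rw [Matrix.trace_add, Matrix.trace_add, Matrix.trace_add,
      csAux_trace_kron_one, csAux_trace_one_kron, csAux_tK, csAux_tK', htr₁, htr₂]
    simp
  rw [csForm, csForm, csForm, hdBB, hcube]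
  rw [← Nat.cast_smul_eq_nsmul ℚ m, ← Nat.cast_smul_eq_nsmul ℚ n,
    ← Nat.cast_smul_eq_nsmul ℚ m (Matrix.trace (A₁ * A₁ * A₁)),
    ← Nat.cast_smul_eq_nsmul ℚ n (Matrix.trace (A₂ * A₂ * A₂))]
  module
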